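/- Let λ ∈ ℝ with λ ≠ 0 and let A_λ be the fuzzy sphere algebra with generators x₁, x₂, x₃. Define the 2×2 matrices over A_λ: P := (1/2)·[[(1+λ)·1 − x₃, x₁ + i x₂], [x₁ − i x₂, (1+λ)·1 + x₃]], and for each k ∈ {1,2,3} set ∂_k x_i := Σ_j ε_{ijk} x_j, ∂_k P := (1/2)·[[−∂_k x₃, ∂_k x₁ + i ∂_k x₂], [∂_k x₁ − i ∂_k x₂, ∂_k x₃]], and Q₁ := [[0,1],[1,0]], Q₂ := [[0,i],[−i,0]], Q₃ := [[−1,0],[0,1]] (scalar matrices). Then for each k ∈ {1,2,3}: (∂_k P)·P = ((1+λ)/2)·∂_k P − (i/2)·(P · x_k) + (i(1−λ²)/4)·Q_k + (i(1−λ)/4)·x_k·I₂, where P·x_k means each entry of P multiplied on the right by x_k. (This is the coefficient form, with respect to the central basis s^k, of the Grassmann connection identity dP·P = ((1+λ)/2)dP + λPθ + (i(1−λ²)/4)Q − (λ(1−λ)/2)θ·I₂ with θ = (1/(2iλ)) x_k s^k.) -/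

import Mathlib

open scoped BigOperators

/-- The Levi-Civita symbol on `{1,2,3}` (totally antisymmetric, `ε₁₂₃ = 1`), as a complex
number. -/
noncomputable def epsC (i j k : Fin 3) : ℂ :=
  (((j : ℕ) : ℂ) - ((i : ℕ) : ℂ)) * (((k : ℕ) : ℂ) - ((j : ℕ) : ℂ)) *
    (((k : ℕ) : ℂ) - ((i : ℕ) : ℂ)) / 2

/-- The defining relations of the fuzzy sphere algebra: the commutation relations
`x_i x_j − x_j x_i = 2iλ ε_{ijk} x_k` and the sphere relation `Σ x_i² = 1 − λ²`. -/
inductive FuzzyRel (t : ℝ) : FreeAlgebra ℂ (Fin 3) → FreeAlgebra ℂ (Fin 3) → Prop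
  | comm (i j : Fin 3) : FuzzyRel t
      (FreeAlgebra.ι ℂ i * FreeAlgebra.ι ℂ j - FreeAlgebra.ι ℂ j * FreeAlgebra.ι ℂ i)
      (∑ k, (2 * Complex.I * (t : ℂ) * epsC i j k) • FreeAlgebra.ι ℂ k)
  | sphere : FuzzyRel t (∑ i, FreeAlgebra.ι ℂ i * FreeAlgebra.ι ℂ i)
      ((1 - (t : ℂ) ^ 2) • (1 : FreeAlgebra ℂ (Fin 3)))

/-- The fuzzy sphere algebra `A_λ`, the quotient of the free algebra on `x₁,x₂,x₃` by the
two-sided ideal generated by the fuzzy sphere relations. -/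
abbrev FuzzyS2 (t : ℝ) := RingQuot (FuzzyRel t)

/-- The generators `x_i` of the fuzzy sphere algebra. -/
noncomputable def xgen (t : ℝ) (i : Fin 3) : FuzzyS2 t :=
  RingQuot.mkAlgHom ℂ (FuzzyRel t) (FreeAlgebra.ι ℂ i)

/-- The partial derivative coefficients `∂_k x_i = Σ_j ε_{ijk} x_j` coming from
`dx_i = ε_{ijk} x_j s^k`. -/
noncomputable def pd (t : ℝ) (k i : Fin 3) : FuzzyS2 t :=
  ∑ j, epsC i j k • xgen t j

/-- The fuzzy monopole projector `P`. -/
noncomputable def Pmat (t : ℝ) : Matrix (Fin 2) (Fin 2) (FuzzyS2 t) :=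
  (2 : ℂ)⁻¹ • !![((1 : ℂ) + t) • 1 - xgen t 2, xgen t 0 + Complex.I • xgen t 1;
    xgen t 0 - Complex.I • xgen t 1, ((1 : ℂ) + t) • 1 + xgen t 2]

/-- The coefficient `∂_k P` of `s^k` in `dP`. -/
noncomputable def dPmat (t : ℝ) (k : Fin 3) : Matrix (Fin 2) (Fin 2) (FuzzyS2 t) :=
  (2 : ℂ)⁻¹ • !![-(pd t k 2), pd t k 0 + Complex.I • pd t k 1;
    pd t k 0 - Complex.I • pd t k 1, pd t k 2]

/-- The scalar matrices `Q₁ = [[0,1],[1,0]]`, `Q₂ = [[0,i],[−i,0]]`, `Q₃ = [[−1,0],[0,1]]`. -/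
noncomputable def Qmat (t : ℝ) : Fin 3 → Matrix (Fin 2) (Fin 2) (FuzzyS2 t) :=
  ![!![0, 1; 1, 0],
    !![0, Complex.I • (1 : FuzzyS2 t); -(Complex.I • (1 : FuzzyS2 t)), 0],
    !![-1, 0; 0, 1]]

/-
Write a `2 × 2` matrix over `A_λ` as `a₀ + Σ aᵢ τᵢ` with `τᵢ = Qᵢ`. These obey the Pauli relations
`τᵢ τⱼ = δᵢⱼ + i εᵢⱼₖ τₖ`, so `(a₀ + a·τ)(b₀ + b·τ) = (a₀b₀ + a·b) + (a₀b + ab₀ + i a×b)·τ`, with dot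
and cross products whose factors keep their order. In these coordinates `P = ½((1+λ) + x·τ)` and
`∂ₖP = ½ (x×eₖ)·τ`, and the defining relations of `A_λ` say `x×x = 2iλ x` and `x·x = 1 - λ²`.
Both sides of the identity then agree by `(x×eₖ)·x = -(x×x)ₖ` and `(x×eₖ)×x = (x·x) eₖ - x xₖ`,
which hold over any ring.
-/

open Complex Matrix

section PauliCoordinates

variable {A : Type*} [Ring A]

def noncommCross (a b : Fin 3 → A) : Fin 3 → A :=
  ![a 1 * b 2 - a 2 * b 1, a 2 * b 0 - a 0 * b 2, a 0 * b 1 - a 1 * b 0]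

theorem noncommCross_zero_right (a : Fin 3 → A) : noncommCross a 0 = 0 := by
  ext i; fin_cases i <;> simp [noncommCross]

theorem noncommCross_single_dotProduct (a : Fin 3 → A) (k : Fin 3) :
    noncommCross a (Pi.single k 1) ⬝ᵥ a = -noncommCross a a k := by
  fin_cases k <;> simp [noncommCross, dotProduct, Fin.sum_univ_three] <;> abel

theorem noncommCross_noncommCross_single (a : Fin 3 → A) (k : Fin 3) :
    noncommCross (noncommCross a (Pi.single k 1)) a =
      Pi.single k (a ⬝ᵥ a) - fun l => a l * a k := by
  ext l
  fin_cases k <;> fin_cases l <;> simp [noncommCross, dotProduct, Fin.sum_univ_three] <;> abel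

variable [Algebra ℂ A]

/-- `a₀ + Σ aᵢ τᵢ`, where `τ₁ = σ₁`, `τ₂ = -σ₂`, `τ₃ = -σ₃` are the matrices `Q_k`. -/
def pauliMatrix (a₀ : A) (a : Fin 3 → A) : Matrix (Fin 2) (Fin 2) A :=
  !![a₀ - a 2, a 0 + I • a 1; a 0 - I • a 1, a₀ + a 2]

theorem pauliMatrix_mul (a₀ b₀ : A) (a b : Fin 3 → A) :
    pauliMatrix a₀ a * pauliMatrix b₀ b =
      pauliMatrix (a₀ * b₀ + a ⬝ᵥ b) (fun l => a₀ * b l + a l * b₀ + I • noncommCross a b l) := by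
  ext i j
  fin_cases i <;> fin_cases j <;>
  · simp only [pauliMatrix, noncommCross, dotProduct, mul_apply, Fin.sum_univ_two,
      Fin.sum_univ_three, Fin.isValue, Fin.zero_eta, Fin.mk_one, of_apply, cons_val', cons_val_zero,
      cons_val_fin_one, cons_val_one, cons_val, mul_add, add_mul, sub_mul, mul_sub, smul_add,
      smul_mul_assoc, mul_smul_comm, smul_smul, I_mul_I]
    match_scalars <;> ring_nf <;> simp [I_sq]

theorem pauliMatrix_add (a₀ b₀ : A) (a b : Fin 3 → A) :
    pauliMatrix a₀ a + pauliMatrix b₀ b = pauliMatrix (a₀ + b₀) (a + b) := by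
  ext i j; fin_cases i <;> fin_cases j <;> simp [pauliMatrix] <;> abel

theorem pauliMatrix_sub (a₀ b₀ : A) (a b : Fin 3 → A) :
    pauliMatrix a₀ a - pauliMatrix b₀ b = pauliMatrix (a₀ - b₀) (a - b) := by
  ext i j; fin_cases i <;> fin_cases j <;> simp [pauliMatrix, smul_sub] <;> abel

theorem smul_pauliMatrix (c : ℂ) (a₀ : A) (a : Fin 3 → A) :
    c • pauliMatrix a₀ a = pauliMatrix (c • a₀) (c • a) := by
  ext i j; fin_cases i <;> fin_cases j <;> simp [pauliMatrix, smul_sub, smul_add, smul_comm c I]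

theorem smul_one_eq_pauliMatrix (c : A) : c • (1 : Matrix (Fin 2) (Fin 2) A) = pauliMatrix c 0 := by
  ext i j; fin_cases i <;> fin_cases j <;> simp [pauliMatrix]

end PauliCoordinates

section FuzzySphere

variable (t : ℝ)

theorem xgen_commutator (i j : Fin 3) :
    xgen t i * xgen t j - xgen t j * xgen t i = ∑ k, (2 * I * t * epsC i j k) • xgen t k := by
  simpa [xgen] using RingQuot.mkAlgHom_rel ℂ (FuzzyRel.comm (t := t) i j)

theorem xgen_dotProduct_self : xgen t ⬝ᵥ xgen t = (1 - (t : ℂ) ^ 2) • 1 := by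
  simpa [xgen, dotProduct] using RingQuot.mkAlgHom_rel ℂ (FuzzyRel.sphere (t := t))

theorem xgen_noncommCross_self : noncommCross (xgen t) (xgen t) = (2 * I * t) • xgen t := by
  have h₀ := xgen_commutator t 1 2
  have h₁ := xgen_commutator t 2 0
  have h₂ := xgen_commutator t 0 1
  norm_num [Fin.sum_univ_three, epsC] at h₀ h₁ h₂
  ext l
  fin_cases l <;> simpa [noncommCross]

theorem pd_eq_noncommCross (k : Fin 3) : pd t k = noncommCross (xgen t) (Pi.single k 1) := by
  ext i
  fin_cases k <;> fin_cases i <;> simp [pd, noncommCross, epsC, Fin.sum_univ_three] <;> module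

theorem Pmat_eq_pauliMatrix : Pmat t = (2 : ℂ)⁻¹ • pauliMatrix (((1 : ℂ) + t) • 1) (xgen t) := rfl

theorem dPmat_eq_pauliMatrix (k : Fin 3) :
    dPmat t k = (2 : ℂ)⁻¹ • pauliMatrix 0 (noncommCross (xgen t) (Pi.single k 1)) := by
  rw [dPmat, ← pd_eq_noncommCross]
  congr 1
  ext i j; fin_cases i <;> fin_cases j <;> simp [pauliMatrix]

theorem Qmat_eq_pauliMatrix (k : Fin 3) : Qmat t k = pauliMatrix 0 (Pi.single k 1) := by
  ext i j; fin_cases k <;> fin_cases i <;> fin_cases j <;> simp [Qmat, pauliMatrix]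

end FuzzySphere

theorem grassmann_connection_coefficients_general (t : ℝ) (k : Fin 3) :
    dPmat t k * Pmat t =
      ((((1 : ℂ) + t) / 2) • dPmat t k) -
        ((Complex.I / 2) • Matrix.of fun a b => Pmat t a b * xgen t k) +
        ((Complex.I * (1 - (t : ℂ) ^ 2) / 4) • Qmat t k) +
        ((Complex.I * (1 - (t : ℂ)) / 4) •
          (xgen t k • (1 : Matrix (Fin 2) (Fin 2) (FuzzyS2 t)))) := by
  have hPx : (Matrix.of fun a b => Pmat t a b * xgen t k) = Pmat t * (xgen t k • 1) := by
    rw [smul_one_eq_diagonal, ← op_smul_eq_mul_diagonal]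
    rfl
  rw [hPx, smul_one_eq_pauliMatrix, Pmat_eq_pauliMatrix, dPmat_eq_pauliMatrix, Qmat_eq_pauliMatrix]
  simp only [Matrix.smul_mul, Matrix.mul_smul, pauliMatrix_mul]
  simp only [smul_pauliMatrix, pauliMatrix_add, pauliMatrix_sub, smul_smul]
  congr 1
  · rw [noncommCross_single_dotProduct, xgen_noncommCross_self]
    simp only [zero_mul, dotProduct_zero, smul_mul_assoc, one_mul, Pi.smul_apply, smul_zero]
    module
  · rw [noncommCross_noncommCross_single, xgen_dotProduct_self, Pi.single_smul',
      noncommCross_zero_right]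
    ext l
    simp only [Pi.add_apply, Pi.sub_apply, Pi.smul_apply, Pi.zero_apply, zero_mul, mul_zero,
      smul_zero, mul_smul_comm, mul_one]
    module

/-- Coefficient form, with respect to the central basis `s^k`, of the Grassmann connection
identity `dP·P = ((1+λ)/2)dP + λPθ + (i(1−λ²)/4)Q − (λ(1−λ)/2)θ·I₂` for the fuzzy monopole:
for each `k`,
`(∂_k P)·P = ((1+λ)/2)·∂_k P − (i/2)·(P·x_k) + (i(1−λ²)/4)·Q_k + (i(1−λ)/4)·x_k·I₂`. -/
theorem grassmann_connection_coefficients (t : ℝ) (ht : t ≠ 0) (k : Fin 3) :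
    dPmat t k * Pmat t =
      ((((1 : ℂ) + t) / 2) • dPmat t k) -
        ((Complex.I / 2) • Matrix.of fun a b => Pmat t a b * xgen t k) +
        ((Complex.I * (1 - (t : ℂ) ^ 2) / 4) • Qmat t k) +
        ((Complex.I * (1 - (t : ℂ)) / 4) •
          (xgen t k • (1 : Matrix (Fin 2) (Fin 2) (FuzzyS2 t)))) :=
  grassmann_connection_coefficients_general t k
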